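/- arXiv:2004.11025 — 2 statements merged into one kernel-verified Lean document; each statement's English description precedes it below -/
import Mathlib

section
/- Let X be an infinite-dimensional closed linear subspace of c₀, let Y be a strictly convex Banach space over the same scalar field, and let T : X → Y be a bounded linear monomorphism (there is C > 0 with ‖Tx‖ ≥ C‖x‖ for all x ∈ X). Then T does not belong to the closure, in the operator norm, of the set QNA(X,Y) of quasi norm attaining operators; in particular, QNA(X,Y) is not dense in L(X,Y). -/
/-!
An operator `S` that is bounded below has a closed image of the unit ball, so if it quasi attains
its norm it attains it at some `x` in the unit ball. In an infinite-dimensional subspace of `c₀`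
no such `x` is extreme: `x` is at most `1/2` beyond some index `N`, and a nonzero `y` of norm
`1/2` vanishing before `N` gives `‖x ± y‖ ≤ 1`. As `S (x + y) + S (x - y) = 2 • S x` has norm
`2 * ‖S‖`, strict convexity of `Y` forces `S (x + y) = S (x - y)`, contradicting injectivity.
Being bounded below by `C` survives perturbations of norm less than `C`, so a whole ball around
`T` misses the quasi norm attaining operators.
-/

open BoundedContinuousFunction Filter Metric

theorem eq_of_norm_le_of_norm_add_eq_two_mul (𝕜 : Type*) {Y : Type*} [RCLike 𝕜]
    [NormedAddCommGroup Y] [NormedSpace 𝕜 Y]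
    (hY : ∀ y₁ y₂ : Y, ‖y₁‖ ≤ 1 → ‖y₂‖ ≤ 1 → y₁ ≠ y₂ → ‖y₁ + y₂‖ < 2)
    {a b : Y} {r : ℝ} (ha : ‖a‖ ≤ r) (hb : ‖b‖ ≤ r) (hab : ‖a + b‖ = 2 * r) : a = b := by
  rcases ((norm_nonneg a).trans ha).eq_or_lt with rfl | hr
  · rw [norm_le_zero_iff.mp ha, norm_le_zero_iff.mp hb]
  set c : 𝕜 := ((r⁻¹ : ℝ) : 𝕜)
  have hc : ‖c‖ = r⁻¹ := by rw [RCLike.norm_ofReal, abs_of_pos (inv_pos.mpr hr)]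
  have hc0 : c ≠ 0 := norm_ne_zero_iff.mp (hc ▸ (inv_pos.mpr hr).ne')
  have hscaled : ∀ z : Y, ‖z‖ ≤ r → ‖c • z‖ ≤ 1 := fun z hz => by
    rw [norm_smul, hc, inv_mul_le_iff₀ hr, mul_one]; exact hz
  by_contra hne
  have hlt := hY _ _ (hscaled a ha) (hscaled b hb) ((smul_right_injective Y hc0).ne hne)
  rw [← smul_add, norm_smul, hc, hab, inv_mul_eq_div, mul_div_assoc, div_self hr.ne',
    mul_one] at hlt
  exact hlt.false

namespace ContinuousLinearMap

variable {𝕜 E F : Type*} [RCLike 𝕜] [NormedAddCommGroup E] [NormedSpace 𝕜 E]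
  [NormedAddCommGroup F] [NormedSpace 𝕜 F]

theorem norm_apply_lt_opNorm_of_injective
    (hF : ∀ y₁ y₂ : F, ‖y₁‖ ≤ 1 → ‖y₂‖ ≤ 1 → y₁ ≠ y₂ → ‖y₁ + y₂‖ < 2)
    (hE : ∀ x : E, ‖x‖ ≤ 1 → ∃ y ≠ 0, ‖x + y‖ ≤ 1 ∧ ‖x - y‖ ≤ 1)
    {S : E →L[𝕜] F} (hS : Function.Injective S) {x : E} (hx : ‖x‖ ≤ 1) : ‖S x‖ < ‖S‖ := by
  have hle : ‖S x‖ ≤ ‖S‖ := by simpa using S.le_opNorm_of_le hx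
  refine hle.lt_of_ne fun hSx => ?_
  obtain ⟨y, hy0, hplus, hminus⟩ := hE x hx
  have hsum : ‖S (x + y) + S (x - y)‖ = 2 * ‖S‖ := by
    rw [← map_add, add_add_sub_cancel, ← two_smul 𝕜 x, map_smul, norm_smul, RCLike.norm_two, hSx]
  have heq := eq_of_norm_le_of_norm_add_eq_two_mul 𝕜 hF (by simpa using S.le_opNorm_of_le hplus)
    (by simpa using S.le_opNorm_of_le hminus) hsum
  have : IsAddTorsionFree E := .of_isTorsionFree 𝕜 E
  rw [sub_eq_add_neg] at heq
  exact hy0 (self_eq_neg.mp (add_left_cancel (hS heq)))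

theorem sub_opNorm_mul_norm_le {T S : E →L[𝕜] F} {C : ℝ} (hT : ∀ x, C * ‖x‖ ≤ ‖T x‖) (x : E) :
    (C - ‖T - S‖) * ‖x‖ ≤ ‖S x‖ := by
  calc (C - ‖T - S‖) * ‖x‖ = C * ‖x‖ - ‖T - S‖ * ‖x‖ := sub_mul _ _ _
    _ ≤ ‖T x‖ - ‖(T - S) x‖ := sub_le_sub (hT x) ((T - S).le_opNorm x)
    _ ≤ ‖S x‖ := by simpa using norm_sub_norm_le (T x) ((T - S) x)

theorem antilipschitz_of_mul_norm_le {S : E →L[𝕜] F} {c : ℝ} (hc : 0 < c)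
    (hS : ∀ x, c * ‖x‖ ≤ ‖S x‖) : AntilipschitzWith (Real.toNNReal c⁻¹) S :=
  S.antilipschitz_of_bound fun x => by
    rw [Real.coe_toNNReal _ (inv_nonneg.mpr hc.le), le_inv_mul_iff₀ hc]
    exact hS x

variable (E F) in
def quasiNormAttaining : Set (E →L[𝕜] F) :=
  {S | ∃ u ∈ closure (S '' closedBall 0 1), ‖u‖ = ‖S‖}

theorem notMem_quasiNormAttaining_of_mul_norm_le [CompleteSpace E]
    (hF : ∀ y₁ y₂ : F, ‖y₁‖ ≤ 1 → ‖y₂‖ ≤ 1 → y₁ ≠ y₂ → ‖y₁ + y₂‖ < 2)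
    (hE : ∀ x : E, ‖x‖ ≤ 1 → ∃ y ≠ 0, ‖x + y‖ ≤ 1 ∧ ‖x - y‖ ≤ 1)
    {S : E →L[𝕜] F} {c : ℝ} (hc : 0 < c) (hS : ∀ x, c * ‖x‖ ≤ ‖S x‖) :
    S ∉ quasiNormAttaining E F := by
  rintro ⟨u, hu, hnorm⟩
  have hanti := antilipschitz_of_mul_norm_le hc hS
  rw [((hanti.isClosedEmbedding S.uniformContinuous).isClosedMap _ isClosed_closedBall).closure_eq]
    at hu
  obtain ⟨x, hx, rfl⟩ := hu
  exact (norm_apply_lt_opNorm_of_injective hF hE hanti.injective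
    (mem_closedBall_zero_iff.mp hx)).ne hnorm

end ContinuousLinearMap

section SequenceSpace

variable {𝕜 : Type*} [RCLike 𝕜]

theorem exists_mem_ne_zero_forall_lt_apply_eq_zero (X : Submodule 𝕜 (ℕ →ᵇ 𝕜))
    (hX : ¬FiniteDimensional 𝕜 X) (N : ℕ) : ∃ y ∈ X, y ≠ 0 ∧ ∀ i < N, y i = 0 := by
  let restrict : X →ₗ[𝕜] Fin N → 𝕜 :=
    (LinearMap.pi fun i : Fin N => (evalCLM 𝕜 (i : ℕ)).toLinearMap).comp X.subtype
  obtain ⟨⟨y, hyX⟩, hy, hy0⟩ := Submodule.exists_mem_ne_zero_of_ne_bot fun h =>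
    hX (.of_injective restrict (LinearMap.ker_eq_bot.mp h))
  exact ⟨y, hyX, by simpa using hy0, fun i hi => congrFun (LinearMap.mem_ker.mp hy) ⟨i, hi⟩⟩

theorem norm_add_le_of_forall_lt_apply_eq_zero {x y : ℕ →ᵇ 𝕜} {N : ℕ} {r : ℝ} (hx : ‖x‖ ≤ r)
    (hxN : ∀ i ≥ N, ‖x i‖ ≤ r - ‖y‖) (hyN : ∀ i < N, y i = 0) : ‖x + y‖ ≤ r := by
  refine (norm_le ((norm_nonneg x).trans hx)).mpr fun i => ?_
  rw [BoundedContinuousFunction.add_apply]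
  rcases lt_or_ge i N with hi | hi
  · simpa [hyN i hi] using (norm_coe_le_norm x i).trans hx
  · calc ‖x i + y i‖ ≤ ‖x i‖ + ‖y i‖ := norm_add_le _ _
      _ ≤ r - ‖y‖ + ‖y‖ := add_le_add (hxN i hi) (norm_coe_le_norm y i)
      _ = r := sub_add_cancel r ‖y‖

theorem exists_ne_zero_norm_add_le_one_and_norm_sub_le_one (X : Submodule 𝕜 (ℕ →ᵇ 𝕜))
    (hXc₀ : ∀ f ∈ X, Tendsto (⇑f) atTop (nhds 0)) (hXinf : ¬FiniteDimensional 𝕜 X)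
    (x : X) (hx : ‖x‖ ≤ 1) : ∃ y ≠ 0, ‖x + y‖ ≤ 1 ∧ ‖x - y‖ ≤ 1 := by
  obtain ⟨N, hN⟩ := eventually_atTop.mp
    ((hXc₀ x x.2).eventually (closedBall_mem_nhds 0 (one_half_pos (α := ℝ))))
  obtain ⟨y, hyX, hy0, hyN⟩ := exists_mem_ne_zero_forall_lt_apply_eq_zero X hXinf N
  set z : ℕ →ᵇ 𝕜 := (2⁻¹ : 𝕜) • ((‖y‖ : 𝕜)⁻¹ • y)
  have hz : ‖z‖ = 1 / 2 := by
    rw [norm_smul, norm_smul_inv_norm hy0, norm_inv, RCLike.norm_two]; norm_num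
  have hzN : ∀ i < N, z i = 0 := fun i hi => by simp [z, hyN i hi]
  have hxN : ∀ i ≥ N, ‖(x : ℕ →ᵇ 𝕜) i‖ ≤ 1 - ‖z‖ := fun i hi => by
    rw [hz]; norm_num; simpa using hN i hi
  refine ⟨⟨z, X.smul_mem _ (X.smul_mem _ hyX)⟩, ?_, ?_, ?_⟩
  · rw [Ne, ← norm_eq_zero]; exact hz.trans_ne (by norm_num)
  · exact norm_add_le_of_forall_lt_apply_eq_zero hx hxN hzN
  · rw [sub_eq_add_neg]
    exact norm_add_le_of_forall_lt_apply_eq_zero (y := -z) hx (by simpa using hxN)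
      (fun i hi => by simp [hzN i hi])

end SequenceSpace

theorem monomorphism_from_subspace_c0_to_strictly_convex_not_in_closure_QNA_general
    {𝕜 Y : Type*} [RCLike 𝕜]
    [NormedAddCommGroup Y] [NormedSpace 𝕜 Y]
    (hY : ∀ y₁ y₂ : Y, ‖y₁‖ ≤ 1 → ‖y₂‖ ≤ 1 → y₁ ≠ y₂ → ‖y₁ + y₂‖ < 2)
    (X : Submodule 𝕜 (ℕ →ᵇ 𝕜)) (hXclosed : IsClosed (X : Set (ℕ →ᵇ 𝕜)))
    (hXc₀ : ∀ f ∈ X, Filter.Tendsto (⇑f) Filter.atTop (nhds (0 : 𝕜)))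
    (hXinf : ¬ FiniteDimensional 𝕜 ↥X)
    (T : ↥X →L[𝕜] Y) (C : ℝ) (hC : 0 < C) (hmono : ∀ x : ↥X, C * ‖x‖ ≤ ‖T x‖) :
    T ∉ closure {S : ↥X →L[𝕜] Y | ∃ u ∈ closure (⇑S '' Metric.closedBall 0 1), ‖u‖ = ‖S‖} ∧
    ¬ Dense {S : ↥X →L[𝕜] Y | ∃ u ∈ closure (⇑S '' Metric.closedBall 0 1), ‖u‖ = ‖S‖} := by
  have : CompleteSpace X := hXclosed.completeSpace_coe
  have hT : T ∉ closure (ContinuousLinearMap.quasiNormAttaining X Y) := by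
    intro hmem
    obtain ⟨S, hS, hdist⟩ := Metric.mem_closure_iff.mp hmem C hC
    rw [dist_eq_norm] at hdist
    exact ContinuousLinearMap.notMem_quasiNormAttaining_of_mul_norm_le hY
      (exists_ne_zero_norm_add_le_one_and_norm_sub_le_one X hXc₀ hXinf) (sub_pos.mpr hdist)
      (ContinuousLinearMap.sub_opNorm_mul_norm_le hmono) hS
  exact ⟨hT, fun hdense => hT (hdense.closure_eq ▸ Set.mem_univ T)⟩

/-- If `X` is an infinite-dimensional closed subspace of `c₀` (realized as a closed
submodule of `ℓ∞ = ℕ →ᵇ 𝕜` all of whose elements converge to `0`), `Y` is a strictly convex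
Banach space, and `T : X → Y` is a bounded linear monomorphism, then `T` is not in the
operator-norm closure of the set of quasi norm attaining operators; in particular that set is
not dense. -/
theorem monomorphism_from_subspace_c0_to_strictly_convex_not_in_closure_QNA
    {𝕜 Y : Type*} [RCLike 𝕜]
    [NormedAddCommGroup Y] [NormedSpace 𝕜 Y] [CompleteSpace Y]
    (hY : ∀ y₁ y₂ : Y, ‖y₁‖ ≤ 1 → ‖y₂‖ ≤ 1 → y₁ ≠ y₂ → ‖y₁ + y₂‖ < 2)
    (X : Submodule 𝕜 (ℕ →ᵇ 𝕜)) (hXclosed : IsClosed (X : Set (ℕ →ᵇ 𝕜)))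
    (hXc₀ : ∀ f ∈ X, Filter.Tendsto (⇑f) Filter.atTop (nhds (0 : 𝕜)))
    (hXinf : ¬ FiniteDimensional 𝕜 ↥X)
    (T : ↥X →L[𝕜] Y) (C : ℝ) (hC : 0 < C) (hmono : ∀ x : ↥X, C * ‖x‖ ≤ ‖T x‖) :
    T ∉ closure {S : ↥X →L[𝕜] Y | ∃ u ∈ closure (⇑S '' Metric.closedBall 0 1), ‖u‖ = ‖S‖} ∧
    ¬ Dense {S : ↥X →L[𝕜] Y | ∃ u ∈ closure (⇑S '' Metric.closedBall 0 1), ‖u‖ = ‖S‖} :=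
  monomorphism_from_subspace_c0_to_strictly_convex_not_in_closure_QNA_general hY X hXclosed hXc₀
    hXinf T C hC hmono
end

section
/- Let Y be an infinite-dimensional Banach space over 𝕂 (= ℝ or ℂ). Then there exists a bounded linear operator T : ℓ₁ → Y which does not quasi attain its norm, i.e., the norm closure of T(B_{ℓ₁}) contains no point of norm ‖T‖. -/
/-!
Mazur's construction gives a normalized basic sequence `z` in `Y`: each `z n` is chosen almost
orthogonal (in the sense of norming functionals) to the span of its predecessors, which bounds
the projections onto initial segments. Let `T eₙ = cₙ zₙ` with `cₙ = 1 - 2⁻⁽ⁿ⁺¹⁾ ↑ 1`, so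
`‖T‖ = 1`. If `u` in the closure of `T(B_{ℓ₁})` had norm one, then approximating `u` by `T a`
with `a` essentially supported on `{0, …, N - 1}` puts `u` near `span {z₀, …, z_{N-1}}`, while
approximating it by `T b` with `‖T b‖` very close to `1` forces `b` to put almost no mass on the
first `N` coordinates (where `cₙ ≤ 1 - 2⁻ᴺ`), so `u` is also near the closed span of
`z_N, z_{N+1}, …`. A bounded basis projection forbids a unit vector to be near both.
-/

open Set Submodule Filter Topology

theorem exists_seq_forall_image_Iio {α : Type*} {P : ℕ → Set α → α → Prop}
    (h : ∀ n (s : Finset α), ∃ a, P n s a) : ∃ f : ℕ → α, ∀ n, P n (f '' Iio n) (f n) := by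
  classical
  choose g hg using h
  let L : ℕ → Finset α := fun n => Nat.rec ∅ (fun m s => insert (g m s) s) n
  let f : ℕ → α := fun n => g n (L n)
  have hL : ∀ n, L n = (Finset.range n).image f := by
    intro n
    induction n with
    | zero => rfl
    | succ n ih => rw [Finset.range_add_one, Finset.image_insert, ← ih]
  refine ⟨f, fun n => ?_⟩
  rw [← Finset.coe_range, ← Finset.coe_image, ← hL]
  exact hg n (L n)

section Mazur

variable {𝕜 Y : Type*} [RCLike 𝕜] [NormedAddCommGroup Y] [NormedSpace 𝕜 Y]

theorem exists_norm_eq_one_forall_mem_apply_eq_zero (hY : ¬ FiniteDimensional 𝕜 Y)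
    (s : Finset (StrongDual 𝕜 Y)) : ∃ z : Y, ‖z‖ = 1 ∧ ∀ f ∈ s, f z = 0 := by
  let G : Y →ₗ[𝕜] s → 𝕜 := LinearMap.pi fun f => (f.1 : Y →ₗ[𝕜] 𝕜)
  obtain ⟨z, hzG, hz⟩ : ∃ z ∈ LinearMap.ker G, z ≠ 0 := exists_mem_ne_zero_of_ne_bot
    fun h => hY (.of_injective G (LinearMap.ker_eq_bot.mp h))
  refine ⟨(‖z‖⁻¹ : 𝕜) • z, norm_smul_inv_norm hz, fun f hf => ?_⟩
  rw [map_smul, show f z = 0 from congrFun (LinearMap.mem_ker.mp hzG) ⟨f, hf⟩, smul_zero]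

theorem exists_finset_strongDual_forall_norm_lt_mul_norm_apply (E : Submodule 𝕜 Y)
    [FiniteDimensional 𝕜 E] {r : ℝ} (hr : 1 < r) :
    ∃ s : Finset (StrongDual 𝕜 Y), (∀ f ∈ s, ‖f‖ ≤ 1) ∧
      ∀ e ∈ E, e ≠ 0 → ∃ f ∈ s, ‖e‖ < r * ‖f e‖ := by
  let U : {f : StrongDual 𝕜 Y // ‖f‖ ≤ 1} → Set Y := fun f => {y | ‖y‖ < r * ‖f.1 y‖}
  have hsphere : IsCompact ((↑) '' Metric.sphere (0 : E) 1 : Set Y) :=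
    (isCompact_sphere 0 1).image continuous_subtype_val
  obtain ⟨t, ht⟩ := hsphere.elim_finite_subcover U
    (fun f => isOpen_lt continuous_norm (continuous_const.mul f.1.continuous.norm)) (by
      rintro _ ⟨y, hy, rfl⟩
      obtain ⟨g, hg1, hgy⟩ := exists_dual_vector'' 𝕜 (y : Y)
      refine mem_iUnion.mpr ⟨⟨g, hg1⟩, ?_⟩
      simp_all [U])
  refine ⟨t.map (Function.Embedding.subtype _), by simp +contextual, fun e he he0 => ?_⟩
  have hunit : (‖e‖⁻¹ : 𝕜) • e ∈ ((↑) '' Metric.sphere (0 : E) 1 : Set Y) :=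
    ⟨⟨_, E.smul_mem _ he⟩, by simpa using norm_smul_inv_norm he0, rfl⟩
  obtain ⟨f, hft, hf⟩ := mem_iUnion₂.mp (ht hunit)
  refine ⟨f.1, Finset.mem_map_of_mem _ hft, ?_⟩
  simp only [U, mem_ofPred_eq, norm_smul_inv_norm he0, map_smul, norm_smul, norm_inv,
    RCLike.norm_ofReal, abs_norm] at hf
  rwa [inv_mul_eq_div, ← mul_div_assoc, one_lt_div (norm_pos_iff.mpr he0)] at hf

/-- Mazur's lemma. -/
theorem exists_norm_eq_one_forall_norm_le_mul_norm_add_smul (hY : ¬ FiniteDimensional 𝕜 Y)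
    (E : Submodule 𝕜 Y) [FiniteDimensional 𝕜 E] {r : ℝ} (hr : 1 < r) :
    ∃ z : Y, ‖z‖ = 1 ∧ ∀ e ∈ E, ∀ t : 𝕜, ‖e‖ ≤ r * ‖e + t • z‖ := by
  obtain ⟨s, hs1, hsE⟩ := exists_finset_strongDual_forall_norm_lt_mul_norm_apply E hr
  obtain ⟨z, hz1, hzs⟩ := exists_norm_eq_one_forall_mem_apply_eq_zero hY s
  refine ⟨z, hz1, fun e he t => ?_⟩
  rcases eq_or_ne e 0 with rfl | he0
  · simp only [norm_zero, zero_add]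
    positivity
  obtain ⟨f, hf, hfe⟩ := hsE e he he0
  calc ‖e‖ ≤ r * ‖f e‖ := hfe.le
    _ = r * ‖f (e + t • z)‖ := by rw [map_add, map_smul, hzs f hf, smul_zero, add_zero]
    _ ≤ r * ‖e + t • z‖ := by
      gcongr
      simpa using f.le_of_opNorm_le (hs1 f hf) (e + t • z)

theorem exists_seq_norm_eq_one_forall_norm_le_mul_norm_add_smul (hY : ¬ FiniteDimensional 𝕜 Y)
    {r : ℕ → ℝ} (hr : ∀ n, 1 < r n) :
    ∃ z : ℕ → Y, (∀ n, ‖z n‖ = 1) ∧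
      ∀ n, ∀ e ∈ span 𝕜 (z '' Iio n), ∀ t : 𝕜, ‖e‖ ≤ r n * ‖e + t • z n‖ := by
  obtain ⟨z, hz⟩ := exists_seq_forall_image_Iio (P := fun n (S : Set Y) a =>
    ‖a‖ = 1 ∧ ∀ e ∈ span 𝕜 S, ∀ t : 𝕜, ‖e‖ ≤ r n * ‖e + t • a‖)
    fun n s => exists_norm_eq_one_forall_norm_le_mul_norm_add_smul hY _ (hr n)
  exact ⟨z, fun n => (hz n).1, fun n => (hz n).2⟩

end Mazur

section Grunblum

variable {𝕜 Y : Type*} [RCLike 𝕜] [NormedAddCommGroup Y] [NormedSpace 𝕜 Y]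

variable (𝕜) in
/-- Grünblum's criterion: together with `z n ≠ 0`, this says that `z` is a basic sequence with
basis constant at most `C`. -/
def GrunblumCondition (C : ℝ) (z : ℕ → Y) : Prop :=
  ∀ N, ∀ h ∈ span 𝕜 (z '' Iio N), ∀ w ∈ span 𝕜 (z '' Ici N), ‖h‖ ≤ C * ‖h + w‖

theorem norm_le_prod_mul_norm_add_of_mem_span_Ico {z : ℕ → Y} {r : ℕ → ℝ} (hr : ∀ n, 0 ≤ r n)
    (hz : ∀ n, ∀ e ∈ span 𝕜 (z '' Iio n), ∀ t : 𝕜, ‖e‖ ≤ r n * ‖e + t • z n‖)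
    {N M : ℕ} (hNM : N ≤ M) {h w : Y} (hh : h ∈ span 𝕜 (z '' Iio N))
    (hw : w ∈ span 𝕜 (z '' Ico N M)) :
    ‖h‖ ≤ (∏ j ∈ Finset.Ico N M, r j) * ‖h + w‖ := by
  induction M, hNM using Nat.le_induction generalizing w with
  | base => simp_all
  | succ M hNM ih =>
    rw [← Finset.coe_Ico, Nat.Ico_succ_right_eq_insert_Ico hNM, Finset.coe_insert, image_insert_eq,
      mem_span_insert] at hw
    obtain ⟨t, w', hw', rfl⟩ := hw
    have hhw' : h + w' ∈ span 𝕜 (z '' Iio M) := add_mem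
      (span_mono (image_mono (Iio_subset_Iio hNM)) hh)
      (span_mono (image_mono fun j hj => (Finset.mem_Ico.mp hj).2) hw')
    rw [Finset.prod_Ico_succ_top hNM, show h + (t • z M + w') = h + w' + t • z M by abel]
    calc ‖h‖ ≤ (∏ j ∈ Finset.Ico N M, r j) * ‖h + w'‖ := ih (by simpa using hw')
      _ ≤ (∏ j ∈ Finset.Ico N M, r j) * (r M * ‖h + w' + t • z M‖) := by
        gcongr
        · exact Finset.prod_nonneg fun j _ => hr j
        · exact hz M _ hhw' t
      _ = _ := (mul_assoc ..).symm

theorem GrunblumCondition.of_prod_le {C : ℝ} {z : ℕ → Y} {r : ℕ → ℝ} (hr : ∀ n, 0 ≤ r n)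
    (hz : ∀ n, ∀ e ∈ span 𝕜 (z '' Iio n), ∀ t : 𝕜, ‖e‖ ≤ r n * ‖e + t • z n‖)
    (hrC : ∀ N M, ∏ j ∈ Finset.Ico N M, r j ≤ C) : GrunblumCondition 𝕜 C z := by
  intro N h hh w hw
  have hmono : Monotone fun M => span 𝕜 (z '' Ico N M) :=
    fun _ _ hM => span_mono (image_mono (Ico_subset_Ico_right hM))
  rw [← iUnion_Ico_right N, image_iUnion, span_iUnion, mem_iSup_of_directed _ hmono.directed_le]
    at hw
  obtain ⟨M, hM⟩ := hw
  calc ‖h‖ ≤ (∏ j ∈ Finset.Ico N (max N M), r j) * ‖h + w‖ :=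
        norm_le_prod_mul_norm_add_of_mem_span_Ico hr hz (le_max_left N M) hh
          (hmono (le_max_right N M) hM)
    _ ≤ C * ‖h + w‖ := by gcongr; exact hrC _ _

theorem GrunblumCondition.norm_le_mul_norm_add_of_mem_closure {C : ℝ} {z : ℕ → Y}
    (hz : GrunblumCondition 𝕜 C z) {N : ℕ} {h w : Y} (hh : h ∈ span 𝕜 (z '' Iio N))
    (hw : w ∈ (span 𝕜 (z '' Ici N)).topologicalClosure) : ‖h‖ ≤ C * ‖h + w‖ :=
  closure_minimal (hz N h hh)
    (isClosed_le continuous_const (continuous_const.mul (continuous_const.add continuous_id).norm))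
    hw

theorem GrunblumCondition.norm_le_abs_mul_norm_sub_add_norm_sub {C : ℝ} {z : ℕ → Y}
    (hz : GrunblumCondition 𝕜 C z) {N : ℕ} {h w : Y} (hh : h ∈ span 𝕜 (z '' Iio N))
    (hw : w ∈ (span 𝕜 (z '' Ici N)).topologicalClosure) (u : Y) :
    ‖h‖ ≤ |C| * (‖u - h‖ + ‖u - w‖) := calc
  ‖h‖ ≤ C * ‖h - w‖ := by
    simpa only [sub_eq_add_neg] using hz.norm_le_mul_norm_add_of_mem_closure hh (neg_mem hw)
  _ ≤ |C| * (‖u - h‖ + ‖u - w‖) := by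
    rw [norm_sub_rev u h]
    exact mul_le_mul (le_abs_self C) (norm_sub_le_norm_sub_add_norm_sub h u w) (norm_nonneg _)
      (abs_nonneg C)

theorem exists_seq_norm_eq_one_grunblumCondition (hY : ¬ FiniteDimensional 𝕜 Y) :
    ∃ z : ℕ → Y, (∀ n, ‖z n‖ = 1) ∧ GrunblumCondition 𝕜 (Real.exp 1) z := by
  obtain ⟨z, hz1, hz⟩ := exists_seq_norm_eq_one_forall_norm_le_mul_norm_add_smul (𝕜 := 𝕜) hY
    (r := fun n => Real.exp ((1 / 2) ^ (n + 1))) fun n => Real.one_lt_exp_iff.mpr (by positivity)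
  refine ⟨z, hz1, .of_prod_le (fun n => (Real.exp_pos _).le) hz fun N M => ?_⟩
  rw [← Real.exp_sum, Real.exp_le_exp]
  calc ∑ j ∈ Finset.Ico N M, (1 / 2 : ℝ) ^ (j + 1)
      ≤ ∑ j ∈ Finset.range M, (1 / 2 : ℝ) ^ (j + 1) :=
        Finset.sum_le_sum_of_subset_of_nonneg
          (by rw [Finset.range_eq_Ico]; exact Finset.Ico_subset_Ico_left (Nat.zero_le N))
          fun _ _ _ => by positivity
    _ = 1 / 2 * ∑ j ∈ Finset.range M, (1 / 2 : ℝ) ^ j := by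
        rw [Finset.mul_sum]; simp only [pow_succ']
    _ ≤ 1 := by linarith [sum_geometric_two_le M]

theorem span_image_smul_eq {c : ℕ → 𝕜} (hc : ∀ n, c n ≠ 0) (z : ℕ → Y) (S : Set ℕ) :
    span 𝕜 ((fun n => c n • z n) '' S) = span 𝕜 (z '' S) := by
  apply le_antisymm <;> rw [span_le] <;> rintro _ ⟨n, hn, rfl⟩
  · exact smul_mem _ _ (subset_span ⟨n, hn, rfl⟩)
  · rw [← inv_smul_smul₀ (hc n) (z n)]
    exact smul_mem _ _ (subset_span ⟨n, hn, rfl⟩)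

theorem GrunblumCondition.smul {C : ℝ} {z : ℕ → Y} (hz : GrunblumCondition 𝕜 C z) {c : ℕ → 𝕜}
    (hc : ∀ n, c n ≠ 0) : GrunblumCondition 𝕜 C fun n => c n • z n := by
  simpa only [GrunblumCondition, span_image_smul_eq hc] using hz

end Grunblum

section Synthesis

open scoped lp

variable {𝕜 Y : Type*} [RCLike 𝕜] [NormedAddCommGroup Y] [NormedSpace 𝕜 Y]

variable (𝕜) in
def QuasiAttainsNorm {X : Type*} [NormedAddCommGroup X] [NormedSpace 𝕜 X] (T : X →L[𝕜] Y) :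
    Prop :=
  ∃ u ∈ closure (T '' Metric.closedBall 0 1), ‖u‖ = ‖T‖

theorem lp.norm_eq_tsum_norm_of_one {α E : Type*} [NormedAddCommGroup E] (x : ℓ¹(α, E)) :
    ‖x‖ = ∑' i, ‖x i‖ := by
  simpa using lp.norm_eq_tsum_rpow (p := 1) (by norm_num) x

theorem lp.summable_norm_of_one {α E : Type*} [NormedAddCommGroup E] (x : ℓ¹(α, E)) :
    Summable fun i => ‖x i‖ := by
  simpa using (lp.memℓp x).summable

theorem summable_norm_smul {v : ℕ → Y} (hv : ∀ n, ‖v n‖ ≤ 1) (x : ℓ¹(ℕ, 𝕜)) :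
    Summable fun n => ‖x n • v n‖ :=
  (lp.summable_norm_of_one x).of_nonneg_of_le (fun _ => norm_nonneg _) fun n =>
    (norm_smul_le _ _).trans (mul_le_of_le_one_right (norm_nonneg _) (hv n))

theorem exists_pos_le_one_forall_lt_norm_le_one_sub {v : ℕ → Y} (hv : ∀ n, ‖v n‖ < 1) (N : ℕ) :
    ∃ δ > 0, δ ≤ 1 ∧ ∀ j < N, ‖v j‖ ≤ 1 - δ := by
  obtain ⟨j₀, -, hj₀⟩ :=
    (Finset.range (N + 1)).exists_max_image (fun j => ‖v j‖) Finset.nonempty_range_add_one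
  refine ⟨1 - ‖v j₀‖, by linarith [hv j₀], by linarith [norm_nonneg (v j₀)], fun j hj => ?_⟩
  linarith [hj₀ j (Finset.mem_range.mpr (by omega))]

variable [CompleteSpace Y]

variable (𝕜) in
noncomputable def synthesisCLM (v : ℕ → Y) (hv : ∀ n, ‖v n‖ ≤ 1) : ℓ¹(ℕ, 𝕜) →L[𝕜] Y :=
  (lp.tsumCLM 𝕜 ℕ Y).comp
    (lp.mapCLM 1 (fun n => ContinuousLinearMap.toSpanSingleton 𝕜 (v n)) zero_le_one
      (by simpa using hv))

variable {v : ℕ → Y} (hv : ∀ n, ‖v n‖ ≤ 1)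

theorem synthesisCLM_apply (x : ℓ¹(ℕ, 𝕜)) : synthesisCLM 𝕜 v hv x = ∑' n, x n • v n := by
  simp [synthesisCLM, ContinuousLinearMap.toSpanSingleton_apply]

theorem hasSum_synthesisCLM (x : ℓ¹(ℕ, 𝕜)) :
    HasSum (fun n => x n • v n) (synthesisCLM 𝕜 v hv x) := by
  rw [synthesisCLM_apply]
  exact (summable_norm_smul hv x).of_norm.hasSum

theorem norm_synthesisCLM_le_one : ‖synthesisCLM 𝕜 v hv‖ ≤ 1 :=
  (ContinuousLinearMap.opNorm_comp_le _ _).trans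
    (mul_le_one₀ lp.norm_tsumCLM_le (norm_nonneg _) (lp.norm_mapCLM_le _ _ _ _))

theorem norm_synthesisCLM_apply_le (x : ℓ¹(ℕ, 𝕜)) :
    ‖synthesisCLM 𝕜 v hv x‖ ≤ ∑' n, ‖x n‖ * ‖v n‖ := by
  simpa only [norm_smul] using
    (hasSum_synthesisCLM hv x).norm_le_of_bounded ((summable_norm_smul hv x).hasSum) fun _ => le_rfl

theorem norm_le_norm_synthesisCLM (n : ℕ) : ‖v n‖ ≤ ‖synthesisCLM 𝕜 v hv‖ := by
  have hsingle : synthesisCLM 𝕜 v hv (lp.single 1 n 1) = v n := by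
    rw [synthesisCLM_apply, tsum_eq_single n fun m hm => by simp [hm]]
    simp
  simpa [hsingle, lp.norm_single] using (synthesisCLM 𝕜 v hv).le_opNorm (lp.single 1 n 1)

theorem norm_synthesisCLM_eq_one (hv1 : Tendsto (fun n => ‖v n‖) atTop (𝓝 1)) :
    ‖synthesisCLM 𝕜 v hv‖ = 1 :=
  (norm_synthesisCLM_le_one hv).antisymm
    (le_of_tendsto' hv1 (norm_le_norm_synthesisCLM hv))

theorem mul_norm_sum_range_le {δ : ℝ} (hδ : 0 ≤ δ) {N : ℕ} (hvδ : ∀ j < N, ‖v j‖ ≤ 1 - δ)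
    (x : ℓ¹(ℕ, 𝕜)) :
    δ * ‖∑ j ∈ Finset.range N, x j • v j‖ ≤ ‖x‖ - ‖synthesisCLM 𝕜 v hv x‖ := by
  have hsum := lp.summable_norm_of_one x
  have hsum' : Summable fun n => ‖x n‖ * ‖v n‖ := by
    simpa only [norm_smul] using summable_norm_smul hv x
  calc δ * ‖∑ j ∈ Finset.range N, x j • v j‖ ≤ δ * ∑ j ∈ Finset.range N, ‖x j‖ := by
        gcongr
        exact (norm_sum_le _ _).trans (Finset.sum_le_sum fun j _ =>
          (norm_smul_le _ _).trans (mul_le_of_le_one_right (norm_nonneg _) (hv j)))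
    _ ≤ ∑ j ∈ Finset.range N, (‖x j‖ - ‖x j‖ * ‖v j‖) := by
        rw [Finset.mul_sum]
        gcongr with j hj
        nlinarith [hvδ j (Finset.mem_range.mp hj), norm_nonneg (x j)]
    _ ≤ ∑' j, (‖x j‖ - ‖x j‖ * ‖v j‖) :=
        (hsum.sub hsum').sum_le_tsum _ fun j _ =>
          sub_nonneg.mpr (mul_le_of_le_one_right (norm_nonneg _) (hv j))
    _ ≤ ‖x‖ - ‖synthesisCLM 𝕜 v hv x‖ := by
        rw [hsum.tsum_sub hsum', lp.norm_eq_tsum_norm_of_one]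
        linarith [norm_synthesisCLM_apply_le hv x]

theorem synthesisCLM_sub_sum_range_mem {N : ℕ} {S : Submodule 𝕜 Y} (hS : ∀ n, N ≤ n → v n ∈ S)
    (x : ℓ¹(ℕ, 𝕜)) :
    synthesisCLM 𝕜 v hv x - ∑ j ∈ Finset.range N, x j • v j ∈ S.topologicalClosure := by
  refine mem_closure_of_tendsto
    ((hasSum_synthesisCLM hv x).tendsto_sum_nat.sub_const (∑ j ∈ Finset.range N, x j • v j))
    ((eventually_ge_atTop N).mono fun M hM => ?_)
  rw [SetLike.mem_coe, ← Finset.sum_Ico_eq_sub _ hM]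
  exact sum_mem fun j hj => S.smul_mem _ (hS j (Finset.mem_Ico.mp hj).1)

theorem not_quasiAttainsNorm_synthesisCLM {v : ℕ → Y} (hv : ∀ n, ‖v n‖ < 1)
    (hv1 : Tendsto (fun n => ‖v n‖) atTop (𝓝 1)) {C : ℝ} (hvC : GrunblumCondition 𝕜 C v) :
    ¬ QuasiAttainsNorm 𝕜 (synthesisCLM 𝕜 v fun n => (hv n).le) := by
  have hv' : ∀ n, ‖v n‖ ≤ 1 := fun n => (hv n).le
  set T := synthesisCLM 𝕜 v hv'
  rintro ⟨u, hu, hu1⟩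
  rw [norm_synthesisCLM_eq_one _ hv1] at hu1
  have happrox : ∀ η > 0, ∃ x : ℓ¹(ℕ, 𝕜), ‖x‖ ≤ 1 ∧ ‖u - T x‖ < η := fun η hη => by
    obtain ⟨_, ⟨x, hx, rfl⟩, hux⟩ := Metric.mem_closure_iff.mp hu η hη
    exact ⟨x, mem_closedBall_zero_iff.mp hx, by rwa [← dist_eq_norm]⟩
  obtain ⟨ε, hε, hεC⟩ := exists_pos_mul_lt one_pos (4 * |C| + 2)
  obtain ⟨a, -, hua⟩ := happrox ε hε
  obtain ⟨N, hN⟩ : ∃ N, ‖T a - ∑ j ∈ Finset.range N, a j • v j‖ < ε := by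
    obtain ⟨N, hN⟩ :=
      Metric.tendsto_atTop.mp (hasSum_synthesisCLM hv' a).tendsto_sum_nat ε hε
    exact ⟨N, by rw [← dist_eq_norm, dist_comm]; exact hN N le_rfl⟩
  obtain ⟨δ, hδ, hδ1, hvδ⟩ := exists_pos_le_one_forall_lt_norm_le_one_sub hv N
  obtain ⟨b, hb1, hub⟩ := happrox (δ * ε) (by positivity)
  set h := ∑ j ∈ Finset.range N, a j • v j
  set w := T b - ∑ j ∈ Finset.range N, b j • v j
  -- `‖T b‖` is so close to `1` that `b` puts almost no mass on the first `N` coordinates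
  have hhead : ‖∑ j ∈ Finset.range N, b j • v j‖ < ε := by
    refine lt_of_mul_lt_mul_left ?_ hδ.le
    linarith [mul_norm_sum_range_le hv' hδ.le hvδ b, norm_sub_norm_le u (T b)]
  have huh : ‖u - h‖ < 2 * ε := by
    linarith [norm_sub_le_norm_sub_add_norm_sub u (T a) h]
  have huw : ‖u - w‖ < 2 * ε := by
    have : u - w = (u - T b) + ∑ j ∈ Finset.range N, b j • v j := by simp only [w]; abel
    rw [this]
    nlinarith [norm_add_le (u - T b) (∑ j ∈ Finset.range N, b j • v j)]
  have hsplit : ‖h‖ ≤ |C| * (‖u - h‖ + ‖u - w‖) := hvC.norm_le_abs_mul_norm_sub_add_norm_sub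
    (sum_mem fun j hj => smul_mem _ _ (subset_span ⟨j, Finset.mem_range.mp hj, rfl⟩))
    (synthesisCLM_sub_sum_range_mem hv' (S := span 𝕜 (v '' Ici N))
      (fun n hn => subset_span ⟨n, hn, rfl⟩) b) u
  have : |C| * (‖u - h‖ + ‖u - w‖) ≤ |C| * (4 * ε) := by gcongr; linarith
  linarith [norm_sub_norm_le u h]

end Synthesis

/-- for every infinite-dimensional Banach space `Y` there exists a bounded linear
operator `T : ℓ₁ → Y` which does not quasi attain its norm. -/
theorem exists_operator_from_l1_not_quasi_attaining {𝕜 Y : Type*} [RCLike 𝕜]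
    [NormedAddCommGroup Y] [NormedSpace 𝕜 Y] [CompleteSpace Y]
    (hY : ¬ FiniteDimensional 𝕜 Y) :
    ∃ T : lp (fun _ : ℕ => 𝕜) 1 →L[𝕜] Y,
      ¬ ∃ u ∈ closure (⇑T '' Metric.closedBall 0 1), ‖u‖ = ‖T‖ := by
  obtain ⟨z, hz1, hz⟩ := exists_seq_norm_eq_one_grunblumCondition (𝕜 := 𝕜) hY
  set c : ℕ → ℝ := fun n => 1 - (1 / 2) ^ (n + 1)
  have hc : ∀ n, 0 < c n ∧ c n < 1 := fun n => by
    simp only [c, sub_pos, sub_lt_self_iff]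
    exact ⟨pow_lt_one₀ (by norm_num) (by norm_num) n.succ_ne_zero, by positivity⟩
  have hnorm : ∀ n, ‖(c n : 𝕜) • z n‖ = c n := fun n => by
    rw [norm_smul, RCLike.norm_ofReal, abs_of_pos (hc n).1, hz1, mul_one]
  have hc1 : Tendsto c atTop (𝓝 1) := by
    simpa [c] using (tendsto_const_nhds (x := (1 : ℝ))).sub
      ((tendsto_pow_atTop_nhds_zero_of_lt_one (by norm_num : (0 : ℝ) ≤ 1 / 2) (by norm_num)).comp
        (tendsto_add_atTop_nat 1))
  exact ⟨_, not_quasiAttainsNorm_synthesisCLM (fun n => (hnorm n).trans_lt (hc n).2)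
    (by simpa only [hnorm] using hc1) (hz.smul fun n => RCLike.ofReal_ne_zero.mpr (hc n).1.ne')⟩
end
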